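/- Let β > −1 and N ∈ ℕ with 2 ≤ |n⃗| ≤ N. Let P be a monic real polynomial of degree |n⃗| satisfying the type II Jacobi–Piñeiro orthogonality conditions ∫_0^1 x^j P(x) x^{α_i} (1−x)^β dx = 0 for every i ∈ {1,…,p} and j ∈ {0,…,n_i−1}, and let Q be a monic real polynomial of degree |n⃗| satisfying the type II Hahn orthogonality conditions ∑_{k=0}^N Q(k) · [Γ(k+α_i+j+1)/Γ(k+1)] · [Γ(β+N−k+1)/Γ(N−k+1)] = 0 for every i ∈ {1,…,p} and j ∈ {0,…,n_i−1}. Write P(x) = ∑_{k=0}^{|n⃗|} p_k x^k, and suppose q_0,…,q_{|n⃗|} are real numbers such that Q(x) = ∑_{k=0}^{|n⃗|} q_k ∏_{j=0}^{k−1}(j−x) for all x. Then q_k = (−1)^k (N−k)!/(N−|n⃗|)! · p_k for every k ∈ {0,…,|n⃗|}. -/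

import Mathlib

/-!
Both polynomials are pinned down by one and the same linear system. With
`B(u, v) = ∫₀¹ x^u (1 - x)^v dx`, the Jacobi–Piñeiro conditions read
`∑ₘ pₘ B(αᵢ + j + m, β) = 0`. On the Hahn side, summing `(-k)ₘ` against the Hahn weight gives
`(-1)^m Γ(N + αᵢ + j + β + 2) / (N - m)! · B(αᵢ + j + m, β)`: each product of two Gamma values is
`Γ(N + αᵢ + j + β + 2)` times a Beta integral, and these integrals add up through the binomial
expansion of `(x + (1 - x))^(N - m)`. Hence `(-1)^m (N - |n|)! / (N - m)! · qₘ` solves the same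
system, with the same leading entry `1` as `pₘ`.

The system is nonsingular. A nonzero vector in the kernel of its transpose gives a type I function
`∑ᵢ Aᵢ(x) x^αᵢ` with `deg Aᵢ < nᵢ`, orthogonal to all polynomials of degree `< |n|` for the weight
`(1 - x)^β`. Dividing by one `x^αᵢ` and differentiating lowers `∑ᵢ nᵢ` by one and, by Rolle, the
number of positive zeros by at most one, so such a function has fewer than `|n|` zeros in `(0, 1)`;
a polynomial of degree `< |n|` changing sign where it does has positive integral against it.
-/

open Finset MeasureTheory Polynomial

/-! ### Beta integrals -/

/-- The Beta integral `B(u + 1, v + 1)`. -/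
noncomputable def jacobiMoment (u v : ℝ) : ℝ := ∫ x in Set.Ioo (0 : ℝ) 1, x ^ u * (1 - x) ^ v

lemma ofReal_rpow_mul_one_sub_rpow {u v x : ℝ} (hx : x ∈ Set.Ioo (0 : ℝ) 1) :
    ((x ^ u * (1 - x) ^ v : ℝ) : ℂ) =
      (x : ℂ) ^ ((u + 1 : ℂ) - 1) * (1 - (x : ℂ)) ^ ((v + 1 : ℂ) - 1) := by
  rw [add_sub_cancel_right, add_sub_cancel_right, Complex.ofReal_mul,
    Complex.ofReal_cpow hx.1.le, Complex.ofReal_cpow (sub_nonneg.2 hx.2.le), Complex.ofReal_sub,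
    Complex.ofReal_one]

lemma integrableOn_rpow_mul_one_sub_rpow {u v : ℝ} (hu : -1 < u) (hv : -1 < v) :
    IntegrableOn (fun x : ℝ => x ^ u * (1 - x) ^ v) (Set.Ioo 0 1) := by
  have h := Complex.betaIntegral_convergent (u := u + 1) (v := v + 1)
    (by simp only [Complex.add_re, Complex.ofReal_re, Complex.one_re]; linarith)
    (by simp only [Complex.add_re, Complex.ofReal_re, Complex.one_re]; linarith)
  rw [intervalIntegrable_iff_integrableOn_Ioc_of_le zero_le_one] at h
  have h' := (h.mono_set Set.Ioo_subset_Ioc_self).congr_fun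
    (fun x hx => (ofReal_rpow_mul_one_sub_rpow hx).symm) measurableSet_Ioo
  simpa [IntegrableOn] using h'.re

lemma Gamma_mul_Gamma_eq_Gamma_mul_jacobiMoment {u v : ℝ} (hu : -1 < u) (hv : -1 < v) :
    Real.Gamma (u + 1) * Real.Gamma (v + 1) = Real.Gamma (u + v + 2) * jacobiMoment u v := by
  have h := Complex.Gamma_mul_Gamma_eq_betaIntegral (s := u + 1) (t := v + 1)
    (by simp only [Complex.add_re, Complex.ofReal_re, Complex.one_re]; linarith)
    (by simp only [Complex.add_re, Complex.ofReal_re, Complex.one_re]; linarith)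
  rw [Complex.betaIntegral, intervalIntegral.integral_of_le zero_le_one,
    integral_Ioc_eq_integral_Ioo,
    ← setIntegral_congr_fun measurableSet_Ioo fun x hx => ofReal_rpow_mul_one_sub_rpow hx,
    integral_complex_ofReal, show (u + 1 : ℂ) + (v + 1) = u + v + 2 by ring] at h
  apply Complex.ofReal_injective
  push_cast [← Complex.Gamma_ofReal]
  exact h

lemma sum_choose_mul_jacobiMoment {u v : ℝ} (hu : -1 < u) (hv : -1 < v) (M : ℕ) :
    ∑ y ∈ range (M + 1), (M.choose y : ℝ) * jacobiMoment (u + y) (v + (M - y : ℕ)) =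
      jacobiMoment u v := by
  have hint : ∀ y ∈ range (M + 1), IntegrableOn
      (fun x : ℝ => (M.choose y : ℝ) * (x ^ (u + y) * (1 - x) ^ (v + (M - y : ℕ)))) (Set.Ioo 0 1) :=
    fun y _ => (integrableOn_rpow_mul_one_sub_rpow (lt_add_of_lt_of_nonneg hu y.cast_nonneg)
      (lt_add_of_lt_of_nonneg hv (M - y).cast_nonneg)).const_mul _
  simp only [jacobiMoment, ← integral_const_mul]
  rw [← integral_finsetSum _ hint]
  refine setIntegral_congr_fun measurableSet_Ioo fun x hx => ?_
  have hx1 : 0 < 1 - x := sub_pos.2 hx.2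
  calc ∑ y ∈ range (M + 1), (M.choose y : ℝ) * (x ^ (u + y) * (1 - x) ^ (v + (M - y : ℕ)))
      = x ^ u * (1 - x) ^ v * (x + (1 - x)) ^ M := by
        rw [add_pow, mul_sum]
        refine sum_congr rfl fun y _ => ?_
        rw [Real.rpow_add hx.1, Real.rpow_add hx1, Real.rpow_natCast, Real.rpow_natCast]
        ring
    _ = x ^ u * (1 - x) ^ v := by rw [add_sub_cancel, one_pow, mul_one]

lemma integrableOn_eval_mul_rpow_mul_one_sub_rpow (R : ℝ[X]) {u v : ℝ} (hu : -1 < u)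
    (hv : -1 < v) : IntegrableOn (fun x => R.eval x * (x ^ u * (1 - x) ^ v)) (Set.Ioo 0 1) :=
  (integrableOn_rpow_mul_one_sub_rpow hu hv).continuousOn_mul_of_subset R.continuousOn
    isCompact_Icc measurableSet_Ioo Set.Ioo_subset_Icc_self

lemma setIntegral_eval_mul_rpow_mul_one_sub_rpow {R : ℝ[X]} {K : ℕ} (hR : R.natDegree < K)
    {u v : ℝ} (hu : -1 < u) (hv : -1 < v) :
    ∫ x in Set.Ioo 0 1, R.eval x * (x ^ u * (1 - x) ^ v) =
      ∑ m ∈ range K, R.coeff m * jacobiMoment (u + m) v := by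
  have hint : ∀ m ∈ range K, IntegrableOn
      (fun x : ℝ => R.coeff m * (x ^ (u + m) * (1 - x) ^ v)) (Set.Ioo 0 1) := fun m _ =>
    (integrableOn_rpow_mul_one_sub_rpow (lt_add_of_lt_of_nonneg hu m.cast_nonneg) hv).const_mul _
  simp only [jacobiMoment, ← integral_const_mul]
  rw [← integral_finsetSum _ hint]
  refine setIntegral_congr_fun measurableSet_Ioo fun x hx => ?_
  simp only [eval_eq_sum_range' hR, sum_mul, Real.rpow_add hx.1, Real.rpow_natCast]
  exact sum_congr rfl fun m _ => by ring

lemma setIntegral_pow_mul_eval_mul_rpow_mul_one_sub_rpow {R : ℝ[X]} {K : ℕ}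
    (hR : R.natDegree < K) {u v : ℝ} (hu : -1 < u) (hv : -1 < v) (j : ℕ) :
    ∫ x in Set.Ioo 0 1, x ^ j * R.eval x * x ^ u * (1 - x) ^ v =
      ∑ m ∈ range K, R.coeff m * jacobiMoment (u + j + m) v := by
  rw [← setIntegral_eval_mul_rpow_mul_one_sub_rpow hR
    (lt_add_of_lt_of_nonneg hu j.cast_nonneg) hv]
  refine setIntegral_congr_fun measurableSet_Ioo fun x hx => ?_
  rw [Real.rpow_add hx.1, Real.rpow_natCast]
  ring

/-! ### Hahn moments -/

lemma prod_range_natCast_sub_eq_descPochhammer {R : Type*} [CommRing R] (m : ℕ) (x : R) :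
    ∏ j ∈ range m, ((j : R) - x) = (-1) ^ m * (descPochhammer R m).eval x := by
  calc ∏ j ∈ range m, ((j : R) - x) = ∏ j ∈ range m, ((-1) * (x - j)) :=
        prod_congr rfl fun _ _ => by ring
    _ = _ := by rw [prod_mul_distrib, prod_const, card_range, descPochhammer_eval_eq_prod_range]

lemma hahn_moment_term {a v : ℝ} (ha : -1 < a) (hv : -1 < v) {m M y : ℕ} (hy : y ≤ M) :
    (∏ j ∈ range m, ((j : ℝ) - (m + y : ℕ))) *
        (Real.Gamma ((m + y : ℕ) + a + 1) / Real.Gamma ((m + y : ℕ) + 1)) *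
        (Real.Gamma (v + (m + M : ℕ) - (m + y : ℕ) + 1) /
          Real.Gamma ((m + M : ℕ) - (m + y : ℕ) + 1)) =
      (-1) ^ m * (Real.Gamma ((m + M : ℕ) + a + v + 2) / M.factorial) *
        ((M.choose y : ℝ) * jacobiMoment (a + m + y) (v + (M - y : ℕ))) := by
  have hMy : ((m + M : ℕ) : ℝ) - (m + y : ℕ) = (M - y : ℕ) := by
    push_cast [Nat.cast_sub hy]; ring
  have hGamma := Gamma_mul_Gamma_eq_Gamma_mul_jacobiMoment (u := a + m + y) (v := v + (M - y : ℕ))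
    (lt_add_of_lt_of_nonneg (lt_add_of_lt_of_nonneg ha m.cast_nonneg) y.cast_nonneg)
    (lt_add_of_lt_of_nonneg hv (M - y).cast_nonneg)
  rw [show a + m + y + (v + (M - y : ℕ)) + 2 = (m + M : ℕ) + a + v + 2 by
    push_cast [Nat.cast_sub hy]; ring] at hGamma
  have hdesc : ((m + y).descFactorial m : ℝ) * y.factorial = (m + y).factorial := by
    have h := Nat.factorial_mul_descFactorial (Nat.le_add_right m y)
    rw [Nat.add_sub_cancel_left, mul_comm] at h
    exact_mod_cast h
  have hchoose : (M.choose y : ℝ) * y.factorial * (M - y).factorial = M.factorial := by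
    exact_mod_cast Nat.choose_mul_factorial_mul_factorial hy
  rw [prod_range_natCast_sub_eq_descPochhammer, descPochhammer_eval_eq_descFactorial,
    add_sub_assoc, hMy, Real.Gamma_nat_eq_factorial, Real.Gamma_nat_eq_factorial,
    show ((m + y : ℕ) : ℝ) + a = a + m + y by push_cast; ring]
  field_simp
  linear_combination ((m + y).descFactorial m * M.factorial : ℝ) * hGamma
    - ((m + y).descFactorial m * Real.Gamma ((m + M : ℕ) + a + v + 2) *
        jacobiMoment (a + m + y) (v + (M - y : ℕ))) * hchoose
    + (M.choose y * Real.Gamma ((m + M : ℕ) + a + v + 2) *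
        jacobiMoment (a + m + y) (v + (M - y : ℕ)) * (M - y).factorial) * hdesc

lemma hahn_moment {a v : ℝ} (ha : -1 < a) (hv : -1 < v) {m N : ℕ} (hm : m ≤ N) :
    ∑ k ∈ range (N + 1), (∏ j ∈ range m, ((j : ℝ) - k)) *
        (Real.Gamma (k + a + 1) / Real.Gamma (k + 1)) *
        (Real.Gamma (v + N - k + 1) / Real.Gamma (N - k + 1)) =
      (-1) ^ m * (Real.Gamma (N + a + v + 2) / (N - m).factorial) * jacobiMoment (a + m) v := by
  obtain ⟨M, rfl⟩ := Nat.exists_eq_add_of_le hm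
  rw [Nat.add_sub_cancel_left, add_assoc, sum_range_add, sum_eq_zero, zero_add,
    sum_congr rfl fun y hy => hahn_moment_term ha hv (Nat.lt_succ_iff.mp (mem_range.mp hy)),
    ← mul_sum, sum_choose_mul_jacobiMoment (lt_add_of_lt_of_nonneg ha m.cast_nonneg) hv]
  intro k hk
  rw [prod_range_natCast_sub_eq_descPochhammer, descPochhammer_eval_coe_nat_of_lt (mem_range.mp hk),
    mul_zero, zero_mul, zero_mul]

lemma hahn_moment_eq_sum_jacobiMoment {Q : ℝ[X]} {q : ℕ → ℝ} {S N : ℕ} (hSN : S ≤ N)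
    (hq : ∀ x : ℝ, Q.eval x = ∑ k ∈ range (S + 1), q k * ∏ j ∈ range k, ((j : ℝ) - x))
    {a v : ℝ} (ha : -1 < a) (hv : -1 < v) :
    ∑ k ∈ range (N + 1), Q.eval (k : ℝ) * (Real.Gamma (k + a + 1) / Real.Gamma (k + 1)) *
        (Real.Gamma (v + N - k + 1) / Real.Gamma (N - k + 1)) =
      Real.Gamma (N + a + v + 2) *
        ∑ m ∈ range (S + 1), (-1) ^ m / (N - m).factorial * q m * jacobiMoment (a + m) v := by
  calc _ = ∑ m ∈ range (S + 1), q m * ∑ k ∈ range (N + 1), (∏ j ∈ range m, ((j : ℝ) - k)) *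
          (Real.Gamma (k + a + 1) / Real.Gamma (k + 1)) *
          (Real.Gamma (v + N - k + 1) / Real.Gamma (N - k + 1)) := by
        simp only [hq, sum_mul, mul_sum]
        rw [sum_comm]
        exact sum_congr rfl fun m _ => sum_congr rfl fun k _ => by ring
    _ = _ := by
        rw [mul_sum]
        refine sum_congr rfl fun m hm => ?_
        rw [hahn_moment ha hv (by have := mem_range.mp hm; omega)]
        ring

lemma sum_coeff_mul_jacobiMoment_eq_zero_of_hahn_orthogonal {Q : ℝ[X]} {q : ℕ → ℝ} {S N : ℕ}
    (hSN : S ≤ N)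
    (hq : ∀ x : ℝ, Q.eval x = ∑ k ∈ range (S + 1), q k * ∏ j ∈ range k, ((j : ℝ) - x))
    {a v : ℝ} (ha : -1 < a) (hv : -1 < v)
    (hQ : ∑ k ∈ range (N + 1), Q.eval (k : ℝ) * (Real.Gamma (k + a + 1) / Real.Gamma (k + 1)) *
        (Real.Gamma (v + N - k + 1) / Real.Gamma (N - k + 1)) = 0) :
    ∑ m ∈ range (S + 1), (-1) ^ m * ((N - S).factorial / (N - m).factorial : ℝ) * q m *
      jacobiMoment (a + m) v = 0 := by
  rw [hahn_moment_eq_sum_jacobiMoment hSN hq ha hv] at hQ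
  have hsum := (mul_eq_zero.mp hQ).resolve_left
    (Real.Gamma_pos_of_pos (by linarith [(N.cast_nonneg : (0 : ℝ) ≤ N)])).ne'
  calc _ = (N - S).factorial * ∑ m ∈ range (S + 1),
        (-1) ^ m / (N - m).factorial * q m * jacobiMoment (a + m) v := by
        rw [mul_sum]
        exact sum_congr rfl fun m _ => by ring
    _ = 0 := by rw [hsum, mul_zero]

lemma coeff_eq_neg_one_pow_of_eval_eq_sum_prod {Q : ℝ[X]} (hQ : Q.Monic) {S : ℕ}
    (hQdeg : Q.natDegree = S) {q : ℕ → ℝ}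
    (hq : ∀ x : ℝ, Q.eval x = ∑ k ∈ range (S + 1), q k * ∏ j ∈ range k, ((j : ℝ) - x)) :
    q S = (-1) ^ S := by
  have hQ' : Q = ∑ k ∈ range (S + 1), C (q k * (-1) ^ k) * descPochhammer ℝ k :=
    Polynomial.funext fun x => by
      simp [hq, eval_finsetSum, prod_range_natCast_sub_eq_descPochhammer, mul_assoc]
  have hQS : Q.coeff S = 1 := hQdeg ▸ hQ.coeff_natDegree
  have hdescS : (descPochhammer ℝ S).coeff S = 1 := by
    simpa [descPochhammer_natDegree] using (monic_descPochhammer ℝ S).coeff_natDegree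
  have hlow : ∀ k ∈ range S, q k * (-1) ^ k * (descPochhammer ℝ k).coeff S = 0 := fun k hk => by
    rw [coeff_eq_zero_of_natDegree_lt (by rw [descPochhammer_natDegree]; exact mem_range.mp hk),
      mul_zero]
  rw [hQ', finsetSum_coeff] at hQS
  simp only [coeff_C_mul] at hQS
  rw [sum_range_succ, sum_eq_zero hlow, zero_add, hdescS, mul_one] at hQS
  have hsq : ((-1 : ℝ) ^ S) * (-1) ^ S = 1 := by rw [← mul_pow]; norm_num
  linear_combination (-1) ^ S * hQS - q S * hsq

/-! ### Zeros of type I functions -/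

noncomputable def eulerOp (δ : ℝ) (A : ℝ[X]) : ℝ[X] := C δ * A + X * derivative A

lemma coeff_eulerOp (δ : ℝ) (A : ℝ[X]) (j : ℕ) :
    (eulerOp δ A).coeff j = (δ + j) * A.coeff j := by
  rcases j with _ | j
  · simp [eulerOp]
  · simp only [eulerOp, coeff_add, coeff_C_mul, coeff_X_mul, coeff_derivative, Nat.cast_add,
      Nat.cast_one]
    ring

lemma degree_eulerOp {δ : ℝ} (hδ : ∀ z : ℤ, δ ≠ z) (A : ℝ[X]) :
    (eulerOp δ A).degree = A.degree := by
  have hδj : ∀ j : ℕ, δ + j ≠ 0 := fun j h => hδ (-j) (by push_cast; linarith)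
  have hsupp : (eulerOp δ A).support = A.support := by
    ext j
    simp [coeff_eulerOp, hδj j]
  rw [degree, hsupp, degree]

lemma hasDerivAt_eval_mul_rpow (δ : ℝ) (A : ℝ[X]) {x : ℝ} (hx : 0 < x) :
    HasDerivAt (fun y => A.eval y * y ^ δ) ((eulerOp δ A).eval x * x ^ (δ - 1)) x := by
  refine ((A.hasDerivAt x).mul (Real.hasDerivAt_rpow_const (Or.inl hx.ne'))).congr_deriv ?_
  rw [eulerOp, eval_add, eval_mul, eval_mul, eval_C, eval_X, Real.rpow_sub_one hx.ne']
  field_simp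
  ring

lemma degree_derivative_lt_sub_one {R : Type*} [Semiring R] {A : R[X]} {n : ℕ} (h : A.degree < n) :
    (derivative A).degree < (n - 1 : ℕ) := by
  rw [degree_lt_iff_coeff_zero] at h ⊢
  intro m hm
  rw [coeff_derivative, h (m + 1) (by omega), zero_mul]

lemma card_le_card_add_one_of_hasDerivAt {f f' : ℝ → ℝ} {U : Set ℝ} (hU : U.OrdConnected)
    (hf : ∀ x ∈ U, HasDerivAt f (f' x) x) {s t : Finset ℝ} (hs : ∀ x ∈ s, x ∈ U ∧ f x = 0)
    (ht : ∀ x ∈ U, f' x = 0 → x ∈ t) : s.card ≤ t.card + 1 :=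
  card_le_of_interleaved fun x hx y hy hxy _ => by
    have hsub : Set.Icc x y ⊆ U := hU.out (hs x hx).1 (hs y hy).1
    obtain ⟨z, hz, hz0⟩ := exists_hasDerivAt_eq_zero hxy
      (fun w hw => (hf w (hsub hw)).continuousAt.continuousWithinAt)
      ((hs x hx).2.trans (hs y hy).2.symm) fun w hw => hf w (hsub (Set.Ioo_subset_Icc_self hw))
    exact ⟨z, ht z (hsub (Set.Ioo_subset_Icc_self hz)) hz0, hz⟩

lemma Set.finite_of_forall_card_lt {α : Type*} {Z : Set α} {K : ℕ}
    (h : ∀ t : Finset α, ↑t ⊆ Z → t.card < K) : Z.Finite := by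
  by_contra hZ
  obtain ⟨t, htZ, htK⟩ := Set.Infinite.exists_subset_card_eq hZ K
  exact (h t htZ).ne htK

section Descartes

variable {ι : Type*} [DecidableEq ι] {γ : ι → ℝ}

/-- For `x > 0`, `d/dx (x ^ (-γ i₀) * ∑ i, A i (x) * x ^ γ i)` is
`∑ i, derivPoly γ A i₀ i (x) * x ^ derivExponent γ i₀ i`: the `i₀`-th polynomial is
differentiated, the others keep their degree. -/
noncomputable def derivPoly (γ : ι → ℝ) (A : ι → ℝ[X]) (i₀ i : ι) : ℝ[X] :=
  if i = i₀ then derivative (A i₀) else eulerOp (γ i - γ i₀) (A i)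

noncomputable def derivExponent (γ : ι → ℝ) (i₀ i : ι) : ℝ :=
  if i = i₀ then 0 else γ i - γ i₀ - 1

lemma derivExponent_sub_ne_intCast (hγ : ∀ i j, i ≠ j → ∀ z : ℤ, γ i - γ j ≠ z) (i₀ : ι) :
    ∀ i j, i ≠ j → ∀ z : ℤ, derivExponent γ i₀ i - derivExponent γ i₀ j ≠ z := by
  intro i j hij z hz
  simp only [derivExponent] at hz
  split_ifs at hz with hi hj hj
  · exact hij (hi.trans hj.symm)
  · exact hγ j i₀ hj (1 - z) (by push_cast; linarith)
  · exact hγ i i₀ hi (z + 1) (by push_cast; linarith)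
  · exact hγ i j hij z (by linarith)

lemma degree_derivPoly_lt (hγ : ∀ i j, i ≠ j → ∀ z : ℤ, γ i - γ j ≠ z) {n : ι → ℕ}
    {A : ι → ℝ[X]} (hA : ∀ i, (A i).degree < n i) (i₀ i : ι) :
    (derivPoly γ A i₀ i).degree < Function.update n i₀ (n i₀ - 1) i := by
  by_cases hi : i = i₀
  · subst hi
    simpa [derivPoly] using degree_derivative_lt_sub_one (hA i)
  · simpa [derivPoly, hi, degree_eulerOp (hγ i i₀ hi)] using hA i

lemma hasDerivAt_sum_eval_mul_rpow_sub [Fintype ι] (A : ι → ℝ[X]) (i₀ : ι) {x : ℝ} (hx : 0 < x) :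
    HasDerivAt (fun y => ∑ i, (A i).eval y * y ^ (γ i - γ i₀))
      (∑ i, (derivPoly γ A i₀ i).eval x * x ^ derivExponent γ i₀ i) x := by
  refine (HasDerivAt.fun_sum fun i _ => hasDerivAt_eval_mul_rpow _ (A i) hx).congr_deriv
    (sum_congr rfl fun i _ => ?_)
  by_cases hi : i = i₀
  · subst hi
    simp only [derivPoly, derivExponent, eulerOp, if_pos, sub_self, map_zero, zero_mul, zero_add,
      eval_mul, eval_X, zero_sub, Real.rpow_neg_one, Real.rpow_zero, mul_one]
    field_simp
  · simp [derivPoly, derivExponent, hi]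

lemma sum_eval_mul_rpow_ne_zero_of_derivPoly_eq_zero [Fintype ι]
    (hγ : ∀ i j, i ≠ j → ∀ z : ℤ, γ i - γ j ≠ z) {A : ι → ℝ[X]} {i₀ : ι} (hi₀ : A i₀ ≠ 0)
    (h : ∀ i, derivPoly γ A i₀ i = 0) {x : ℝ} (hx : 0 < x) :
    ∑ i, (A i).eval x * x ^ γ i ≠ 0 := by
  have hA : ∀ i ≠ i₀, A i = 0 := fun i hi => by
    have h := h i
    simp only [derivPoly, if_neg hi] at h
    rw [← degree_eq_bot, ← degree_eulerOp (hγ i i₀ hi), h, degree_zero]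
  have hc : A i₀ = C ((A i₀).coeff 0) :=
    eq_C_of_derivative_eq_zero (by simpa [derivPoly] using h i₀)
  rw [sum_eq_single i₀ (fun i _ hi => by rw [hA i hi, eval_zero, zero_mul]) (by simp), hc, eval_C]
  exact mul_ne_zero (fun h0 => hi₀ (by rw [hc, h0, C_0])) (Real.rpow_pos_of_pos hx _).ne'

theorem card_lt_of_sum_eval_mul_rpow_eq_zero [Fintype ι]
    (hγ : ∀ i j, i ≠ j → ∀ z : ℤ, γ i - γ j ≠ z) {n : ι → ℕ} {A : ι → ℝ[X]}
    (hA : ∀ i, (A i).degree < n i) (hA0 : ∃ i, A i ≠ 0) {t : Finset ℝ}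
    (ht : ∀ x ∈ t, 0 < x ∧ ∑ i, (A i).eval x * x ^ γ i = 0) :
    t.card < ∑ i, n i := by
  generalize hK : ∑ i, n i = K
  induction K generalizing γ n A t with
  | zero =>
    obtain ⟨i, hi⟩ := hA0
    have hni : n i = 0 := (sum_eq_zero_iff.mp hK) i (mem_univ i)
    exact absurd (degree_eq_bot.mp (by simpa [hni] using hA i)) hi
  | succ K ih =>
    obtain ⟨i₀, hi₀⟩ := hA0
    by_cases hA' : ∃ i, derivPoly γ A i₀ i ≠ 0
    · have hn₀ : 0 < n i₀ :=
        Nat.pos_of_ne_zero fun h => hi₀ (degree_eq_bot.mp (by simpa [h] using hA i₀))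
      have hK' : ∑ i, Function.update n i₀ (n i₀ - 1) i = K := by
        have h1 := sum_update_of_mem (mem_univ i₀) n (n i₀ - 1)
        have h2 := add_sum_erase univ n (mem_univ i₀)
        rw [sdiff_singleton_eq_erase] at h1
        omega
      have ih' := @ih _ (derivExponent_sub_ne_intCast hγ i₀) _ _ (degree_derivPoly_lt hγ hA i₀) hA'
      have hfin : {x | x ∈ Set.Ioi (0 : ℝ) ∧
          ∑ i, (derivPoly γ A i₀ i).eval x * x ^ derivExponent γ i₀ i = 0}.Finite :=
        Set.finite_of_forall_card_lt fun s hs => ih' (fun x hx => hs hx) hK'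
      -- Dividing by `x ^ γ i₀` keeps the positive zeros; by Rolle the derivative has at most
      -- one zero fewer.
      have ht' : ∀ x ∈ t, x ∈ Set.Ioi (0 : ℝ) ∧ ∑ i, (A i).eval x * x ^ (γ i - γ i₀) = 0 :=
        fun x hx => ⟨(ht x hx).1, by
          simp only [Real.rpow_sub (ht x hx).1, ← mul_div_assoc, ← sum_div, (ht x hx).2, zero_div]⟩
      calc t.card ≤ hfin.toFinset.card + 1 :=
            card_le_card_add_one_of_hasDerivAt Set.ordConnected_Ioi
              (fun x hx => hasDerivAt_sum_eval_mul_rpow_sub A i₀ hx) ht'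
              fun x hx h => hfin.mem_toFinset.2 ⟨hx, h⟩
        _ < K + 1 := Nat.succ_lt_succ (ih' (fun x hx => hfin.mem_toFinset.1 hx) hK')
    · push Not at hA'
      rcases t.eq_empty_or_nonempty with rfl | ⟨x, hx⟩
      · simp
      · exact absurd (ht x hx).2
          (sum_eval_mul_rpow_ne_zero_of_derivPoly_eq_zero hγ hi₀ hA' (ht x hx).1)

end Descartes

lemma IsPreconnected.mul_pos_of_ne_zero {X : Type*} [TopologicalSpace X] {s : Set X}
    (hs : IsPreconnected s) {f : X → ℝ} (hf : ContinuousOn f s) (hf0 : ∀ x ∈ s, f x ≠ 0)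
    {x y : X} (hx : x ∈ s) (hy : y ∈ s) : 0 < f x * f y := by
  by_contra h
  rcases mul_nonpos_iff.mp (not_lt.mp h) with ⟨hx0, hy0⟩ | ⟨hx0, hy0⟩
  · obtain ⟨z, hz, hz0⟩ := hs.intermediate_value hy hx hf ⟨hy0, hx0⟩
    exact hf0 z hz hz0
  · obtain ⟨z, hz, hz0⟩ := hs.intermediate_value hx hy hf ⟨hx0, hy0⟩
    exact hf0 z hz hz0

lemma IsPreconnected.exists_mul_pos_of_ne_zero {X : Type*} [TopologicalSpace X] {s : Set X}
    (hs : IsPreconnected s) {f : X → ℝ} (hf : ContinuousOn f s) (hf0 : ∀ x ∈ s, f x ≠ 0) :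
    ∃ c : ℝ, c ≠ 0 ∧ ∀ x ∈ s, 0 < f x * c := by
  rcases s.eq_empty_or_nonempty with rfl | ⟨y, hy⟩
  · exact ⟨1, one_ne_zero, by simp⟩
  · exact ⟨f y, hf0 y hy, fun x hx => hs.mul_pos_of_ne_zero hf hf0 hx hy⟩

lemma exists_polynomial_mul_pos {G : ℝ → ℝ} {b : ℝ} (Z : Finset ℝ) {a : ℝ}
    (hG : ContinuousOn G (Set.Ioo a b)) (hZ : ↑Z ⊆ Set.Ioo a b)
    (hG0 : ∀ x ∈ Set.Ioo a b, G x = 0 → x ∈ Z) :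
    ∃ π : ℝ[X], π.natDegree ≤ Z.card ∧ (∀ x, π.eval x = 0 → x ∈ Z) ∧
      ∀ x ∈ Set.Ioo a b, x ∉ Z → 0 < G x * π.eval x := by
  induction Z using Finset.induction_on_min generalizing a with
  | empty =>
    obtain ⟨c, hc0, hc⟩ := isPreconnected_Ioo.exists_mul_pos_of_ne_zero hG
      fun x hx h => by simpa using hG0 x hx h
    exact ⟨C c, by simp, fun x hx => (hc0 (by simpa using hx)).elim,
      fun x hx _ => by simpa using hc x hx⟩
  | insert t Z htZ ih =>
    have ht : t ∈ Set.Ioo a b := hZ (mem_insert_self t Z)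
    have htZ' : t ∉ Z := fun h => (htZ t h).false
    obtain ⟨π₀, hdeg, hroots, hpos⟩ := ih (hG.mono (Set.Ioo_subset_Ioo_left ht.1.le))
      (fun z hz => ⟨htZ z hz, (hZ (mem_insert_of_mem hz)).2⟩)
      (fun x hx h => (mem_insert.mp (hG0 x ⟨ht.1.trans hx.1, hx.2⟩ h)).resolve_left hx.1.ne')
    have hsub : Set.Ioo a t ⊆ Set.Ioo a b := Set.Ioo_subset_Ioo_right ht.2.le
    -- Left of `t` neither factor vanishes, so `G π₀` has a constant sign there; if it is
    -- negative, a sign change at `t` is added.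
    obtain ⟨c, hc0, hc⟩ := isPreconnected_Ioo.exists_mul_pos_of_ne_zero
      ((hG.mono hsub).mul π₀.continuousOn) fun x hx => mul_ne_zero
        (fun h => (mem_insert.mp (hG0 x (hsub hx) h)).elim hx.2.ne
          fun hxZ => (htZ x hxZ).not_gt hx.2)
        (fun h => (htZ x (hroots x h)).not_gt hx.2)
    rcases hc0.lt_or_gt with hneg | hpos'
    · refine ⟨π₀ * (X - C t), ?_, fun x hx => ?_, fun x hx hxZ => ?_⟩
      · rw [card_insert_of_notMem htZ']
        exact natDegree_mul_le.trans (by rw [natDegree_X_sub_C]; omega)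
      · rcases mul_eq_zero.mp ((eval_mul ..).symm.trans hx) with h | h
        · exact mem_insert_of_mem (hroots x h)
        · rw [eval_sub, eval_X, eval_C, sub_eq_zero] at h
          exact h ▸ mem_insert_self t Z
      · rw [eval_mul, eval_sub, eval_X, eval_C, ← mul_assoc]
        rcases lt_trichotomy x t with hxt | rfl | hxt
        · exact mul_pos_of_neg_of_neg (neg_of_mul_pos_left (hc x ⟨hx.1, hxt⟩) hneg.le)
            (sub_neg.2 hxt)
        · exact (hxZ (mem_insert_self x Z)).elim
        · exact mul_pos (hpos x ⟨hxt, hx.2⟩ fun h => hxZ (mem_insert_of_mem h)) (sub_pos.2 hxt)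
    · refine ⟨π₀, hdeg.trans (card_le_card (subset_insert t Z)),
        fun x hx => mem_insert_of_mem (hroots x hx), fun x hx hxZ => ?_⟩
      rcases lt_trichotomy x t with hxt | rfl | hxt
      · exact pos_of_mul_pos_left (hc x ⟨hx.1, hxt⟩) hpos'.le
      · exact (hxZ (mem_insert_self x Z)).elim
      · exact hpos x ⟨hxt, hx.2⟩ fun h => hxZ (mem_insert_of_mem h)

lemma exists_polynomial_natDegree_lt_ae_mul_pos {G : ℝ → ℝ} {a b : ℝ}
    (hG : ContinuousOn G (Set.Ioo a b)) {K : ℕ}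
    (hK : ∀ t : Finset ℝ, ↑t ⊆ {x | x ∈ Set.Ioo a b ∧ G x = 0} → t.card < K) :
    ∃ π : ℝ[X], π.natDegree < K ∧ ∀ᵐ x ∂volume.restrict (Set.Ioo a b), 0 < G x * π.eval x := by
  have hfin := Set.finite_of_forall_card_lt hK
  obtain ⟨π, hdeg, -, hpos⟩ := exists_polynomial_mul_pos hfin.toFinset hG
    (fun x hx => (hfin.mem_toFinset.1 hx).1) fun x hx h => hfin.mem_toFinset.2 ⟨hx, h⟩
  refine ⟨π, hdeg.trans_lt (hK _ fun x hx => hfin.mem_toFinset.1 hx), ?_⟩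
  filter_upwards [ae_restrict_mem measurableSet_Ioo, ae_restrict_of_ae
    (measure_eq_zero_iff_ae_notMem.mp (hfin.toFinset.finite_toSet.measure_zero volume))]
    with x hx hxZ
  exact hpos x hx hxZ

lemma setIntegral_pos_of_ae_pos {X : Type*} [MeasurableSpace X] {μ : Measure X} {s : Set X}
    {f : X → ℝ} (hf : IntegrableOn f s μ) (hs : μ s ≠ 0) (hpos : ∀ᵐ x ∂μ.restrict s, 0 < f x) :
    0 < ∫ x in s, f x ∂μ := by
  rw [integral_pos_iff_support_of_nonneg_ae (hpos.mono fun x hx => hx.le) hf]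
  calc 0 < μ.restrict s Set.univ := by rw [Measure.restrict_apply_univ]; exact pos_iff_ne_zero.2 hs
    _ ≤ μ.restrict s (Function.support f) := measure_mono_ae (hpos.mono fun x hx _ => hx.ne')

section TypeI

variable {ι : Type*} [Fintype ι] {n : ι → ℕ}

noncomputable def typeIFun (α : ι → ℝ) (v : (i : ι) × Fin (n i) → ℝ) (x : ℝ) : ℝ :=
  ∑ a, v a * x ^ (α a.1 + a.2)

lemma card_lt_of_typeIFun_eq_zero [DecidableEq ι] {α : ι → ℝ}
    (hαint : ∀ i j, i ≠ j → ∀ z : ℤ, α i - α j ≠ z) {v : (i : ι) × Fin (n i) → ℝ} (hv : v ≠ 0)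
    {t : Finset ℝ} (ht : ∀ x ∈ t, 0 < x ∧ typeIFun α v x = 0) : t.card < ∑ i, n i := by
  set A : ι → ℝ[X] := fun i => ∑ j : Fin (n i), C (v ⟨i, j⟩) * X ^ (j : ℕ)
  have hA0 : ∃ i, A i ≠ 0 := by
    obtain ⟨⟨i, j⟩, hij⟩ := Function.ne_iff.mp hv
    refine ⟨i, fun h => hij ?_⟩
    simpa [A, finsetSum_coeff, coeff_C_mul_X_pow, Fin.val_inj] using congrArg (coeff · j) h
  refine card_lt_of_sum_eval_mul_rpow_eq_zero hαint (fun i => degree_sum_fin_lt _) hA0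
    fun x hx => ⟨(ht x hx).1, ?_⟩
  rw [← (ht x hx).2]
  simp only [typeIFun, eval_finsetSum, eval_mul, eval_C, eval_pow, eval_X, sum_mul,
    Fintype.sum_sigma, Real.rpow_add (ht x hx).1, Real.rpow_natCast]
  exact sum_congr rfl fun i _ => sum_congr rfl fun j _ => by ring

variable {α : ι → ℝ} {β : ℝ} (v : (i : ι) × Fin (n i) → ℝ)

lemma typeIFun_mul_eval_mul_one_sub_rpow (π : ℝ[X]) (x : ℝ) :
    typeIFun α v x * π.eval x * (1 - x) ^ β =
      ∑ a, v a * (π.eval x * (x ^ (α a.1 + a.2) * (1 - x) ^ β)) := by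
  simp only [typeIFun, sum_mul]
  exact sum_congr rfl fun a _ => by ring

lemma integrableOn_typeIFun_mul_eval_mul_one_sub_rpow (hα : ∀ i, -1 < α i) (hβ : -1 < β)
    (π : ℝ[X]) :
    IntegrableOn (fun x => typeIFun α v x * π.eval x * (1 - x) ^ β) (Set.Ioo 0 1) := by
  simp only [typeIFun_mul_eval_mul_one_sub_rpow]
  exact integrable_finsetSum _ fun a _ => (integrableOn_eval_mul_rpow_mul_one_sub_rpow π
    (lt_add_of_lt_of_nonneg (hα a.1) (Nat.cast_nonneg _)) hβ).const_mul _

lemma setIntegral_typeIFun_mul_eval_mul_one_sub_rpow (hα : ∀ i, -1 < α i) (hβ : -1 < β)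
    {π : ℝ[X]} {K : ℕ} (hπ : π.natDegree < K) :
    ∫ x in Set.Ioo 0 1, typeIFun α v x * π.eval x * (1 - x) ^ β =
      ∑ m ∈ range K, π.coeff m * ∑ a, v a * jacobiMoment (α a.1 + a.2 + m) β := by
  have hγ : ∀ a : (i : ι) × Fin (n i), -1 < α a.1 + a.2 :=
    fun a => lt_add_of_lt_of_nonneg (hα a.1) (Nat.cast_nonneg _)
  simp only [typeIFun_mul_eval_mul_one_sub_rpow, integral_finsetSum _ fun a _ =>
    (integrableOn_eval_mul_rpow_mul_one_sub_rpow π (hγ a) hβ).const_mul (v a),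
    integral_const_mul, setIntegral_eval_mul_rpow_mul_one_sub_rpow hπ (hγ _) hβ, mul_sum]
  rw [sum_comm]
  exact sum_congr rfl fun m _ => sum_congr rfl fun a _ => by ring

theorem eq_zero_of_forall_sum_mul_jacobiMoment_eq_zero [DecidableEq ι] (hα : ∀ i, -1 < α i)
    (hαint : ∀ i j, i ≠ j → ∀ z : ℤ, α i - α j ≠ z) (hβ : -1 < β) {v : (i : ι) × Fin (n i) → ℝ}
    (hv : ∀ m < ∑ i, n i, ∑ a, v a * jacobiMoment (α a.1 + a.2 + m) β = 0) : v = 0 := by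
  by_contra hv0
  have hG : ContinuousOn (typeIFun α v) (Set.Ioo 0 1) := continuousOn_finsetSum _ fun a _ =>
    continuousOn_const.mul (continuousOn_id.rpow_const fun x hx => Or.inl hx.1.ne')
  obtain ⟨π, hπ, hpos⟩ := exists_polynomial_natDegree_lt_ae_mul_pos hG
    fun t ht => card_lt_of_typeIFun_eq_zero hαint hv0 fun x hx => ⟨(ht hx).1.1, (ht hx).2⟩
  -- `typeIFun α v` is orthogonal to all polynomials of degree `< ∑ i, n i`, yet `π` follows its
  -- sign changes.
  have hzero : ∫ x in Set.Ioo 0 1, typeIFun α v x * π.eval x * (1 - x) ^ β = 0 := by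
    rw [setIntegral_typeIFun_mul_eval_mul_one_sub_rpow v hα hβ hπ]
    exact sum_eq_zero fun m hm => by rw [hv m (mem_range.mp hm), mul_zero]
  refine (setIntegral_pos_of_ae_pos (integrableOn_typeIFun_mul_eval_mul_one_sub_rpow v hα hβ π)
    (by simp) ?_).ne' hzero
  filter_upwards [ae_restrict_mem measurableSet_Ioo, hpos] with x hx hGx
  exact mul_pos hGx (Real.rpow_pos_of_pos (sub_pos.2 hx.2) β)

end TypeI

/-! ### Normality of the Jacobi–Piñeiro system -/

lemma Matrix.mulVec_injective_of_vecMul_injective {m n K : Type*} [Field K] [Fintype m]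
    [Fintype n] [DecidableEq m] (h : Fintype.card m = Fintype.card n) {M : Matrix m n K}
    (hM : Function.Injective fun v => Matrix.vecMul v M) : Function.Injective M.mulVec := by
  let e : m ≃ n := Fintype.equivOfCardEq h
  have hsq : Function.Injective fun v => Matrix.vecMul v (M.submatrix (Equiv.refl m) e) := by
    have hcomp : (fun v => Matrix.vecMul v (M.submatrix (Equiv.refl m) e)) =
        (· ∘ e) ∘ fun v => Matrix.vecMul v M :=
      funext fun v => Matrix.submatrix_vecMul_equiv M v (Equiv.refl m) e
    rw [hcomp]
    exact e.surjective.injective_comp_right.comp hM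
  have hsq' := Matrix.mulVec_injective_iff_isUnit.mpr (Matrix.vecMul_injective_iff_isUnit.mp hsq)
  intro v w hvw
  refine e.surjective.injective_comp_right (hsq' ?_)
  simp only [Matrix.submatrix_mulVec_equiv, Function.comp_assoc, Equiv.self_comp_symm,
    Function.comp_id, hvw]

theorem eq_zero_of_forall_sum_coeff_mul_jacobiMoment_eq_zero {ι : Type*} [Fintype ι]
    [DecidableEq ι] {n : ι → ℕ} {α : ι → ℝ} (hα : ∀ i, -1 < α i)
    (hαint : ∀ i j, i ≠ j → ∀ z : ℤ, α i - α j ≠ z) {β : ℝ} (hβ : -1 < β) {d : ℕ → ℝ}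
    (hd : ∀ i, ∀ j < n i, ∑ m ∈ range (∑ i, n i), d m * jacobiMoment (α i + j + m) β = 0) :
    ∀ m < ∑ i, n i, d m = 0 := by
  set S := ∑ i, n i
  let M : Matrix ((i : ι) × Fin (n i)) (Fin S) ℝ := fun a m => jacobiMoment (α a.1 + a.2 + m) β
  have hvec : Function.Injective fun v => Matrix.vecMul v M := by
    intro v w hvw
    rw [← sub_eq_zero]
    refine eq_zero_of_forall_sum_mul_jacobiMoment_eq_zero hα hαint hβ fun m hm => ?_
    have := congrFun (sub_eq_zero.2 hvw) ⟨m, hm⟩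
    simpa [M, Matrix.vecMul, dotProduct, sub_mul] using this
  have hd0 : (fun m : Fin S => d m) = 0 :=
    Matrix.mulVec_injective_of_vecMul_injective (by simp [S]) hvec <| by
      ext a
      have h := hd a.1 a.2 a.2.isLt
      rw [← Fin.sum_univ_eq_sum_range (fun m => d m * jacobiMoment (α a.1 + a.2 + m) β)] at h
      simpa [M, Matrix.mulVec, dotProduct, mul_comm] using h
  exact fun m hm => congrFun hd0 ⟨m, hm⟩

theorem eq_of_forall_sum_coeff_mul_jacobiMoment_eq_zero {ι : Type*} [Fintype ι]
    [DecidableEq ι] {n : ι → ℕ} {α : ι → ℝ} (hα : ∀ i, -1 < α i)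
    (hαint : ∀ i j, i ≠ j → ∀ z : ℤ, α i - α j ≠ z) {β : ℝ} (hβ : -1 < β) {x y : ℕ → ℝ}
    (hxy : x (∑ i, n i) = y (∑ i, n i))
    (hx : ∀ i, ∀ j < n i, ∑ m ∈ range (∑ i, n i + 1), x m * jacobiMoment (α i + j + m) β = 0)
    (hy : ∀ i, ∀ j < n i, ∑ m ∈ range (∑ i, n i + 1), y m * jacobiMoment (α i + j + m) β = 0) :
    ∀ m ≤ ∑ i, n i, x m = y m := by
  have hd := eq_zero_of_forall_sum_coeff_mul_jacobiMoment_eq_zero hα hαint hβ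
    (d := fun m => x m - y m) fun i j hj => by
      have hxij := hx i j hj
      have hyij := hy i j hj
      rw [sum_range_succ, hxy] at hxij
      rw [sum_range_succ] at hyij
      simp only [sub_mul, sum_sub_distrib]
      linarith
  intro m hm
  rcases hm.lt_or_eq with hm | rfl
  · exact sub_eq_zero.mp (hd m hm)
  · exact hxy

theorem hahn_jacobiPineiro_coefficient_relation_general
    (p : ℕ) (n : Fin p → ℕ)
    (S : ℕ) (hS : S = ∑ i, n i)
    (α : Fin p → ℝ) (hα : ∀ i, -1 < α i)
    (hαint : ∀ i j, i ≠ j → ∀ z : ℤ, α i - α j ≠ (z : ℝ))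
    (β : ℝ) (hβ : -1 < β) (N : ℕ) (hSN : S ≤ N)
    (P : Polynomial ℝ) (hPmonic : P.Monic) (hPdeg : P.natDegree = S)
    (hPorth : ∀ i, ∀ j < n i,
      ∫ x in Set.Ioo (0 : ℝ) 1, x ^ j * P.eval x * x ^ α i * (1 - x) ^ β = 0)
    (Q : Polynomial ℝ) (hQmonic : Q.Monic) (hQdeg : Q.natDegree = S)
    (hQorth : ∀ i, ∀ j < n i,
      ∑ k ∈ range (N + 1),
        Q.eval (k : ℝ) * (Real.Gamma ((k : ℝ) + α i + j + 1) / Real.Gamma ((k : ℝ) + 1)) *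
          (Real.Gamma (β + N - k + 1) / Real.Gamma ((N : ℝ) - k + 1)) = 0)
    (q : ℕ → ℝ)
    (hq : ∀ x : ℝ, Q.eval x = ∑ k ∈ range (S + 1), q k * ∏ j ∈ range k, ((j : ℝ) - x)) :
    ∀ k ≤ S,
      q k = (-1 : ℝ) ^ k * ((Nat.factorial (N - k) : ℝ) / (Nat.factorial (N - S) : ℝ)) *
        P.coeff k := by
  subst hS
  set c : ℕ → ℝ := fun m => (-1) ^ m * ((N - ∑ i, n i).factorial / (N - m).factorial) * q m
  have hcS : c (∑ i, n i) = 1 := by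
    have hsq : ((-1 : ℝ) ^ ∑ i, n i) * (-1) ^ ∑ i, n i = 1 := by rw [← mul_pow]; norm_num
    have hfac : ((N - ∑ i, n i).factorial : ℝ) ≠ 0 := by positivity
    simp only [c, coeff_eq_neg_one_pow_of_eval_eq_sum_prod hQmonic hQdeg hq, div_self hfac,
      mul_one, hsq]
  have hPc := eq_of_forall_sum_coeff_mul_jacobiMoment_eq_zero hα hαint hβ
    ((hPdeg ▸ hPmonic.coeff_natDegree).trans hcS.symm)
    (fun i j hj => by
      rw [← hPorth i j hj, setIntegral_pow_mul_eval_mul_rpow_mul_one_sub_rpow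
        (by omega : P.natDegree < ∑ i, n i + 1) (hα i) hβ])
    fun i j hj => sum_coeff_mul_jacobiMoment_eq_zero_of_hahn_orthogonal hSN hq
      (lt_add_of_lt_of_nonneg (hα i) j.cast_nonneg) hβ
      (by simpa only [add_assoc _ (α i) (j : ℝ)] using hQorth i j hj)
  intro k hk
  have hsq : ((-1 : ℝ) ^ k) * (-1) ^ k = 1 := by rw [← mul_pow]; norm_num
  rw [hPc k hk]
  field_simp
  linear_combination -q k * hsq

/-- Relation between the coefficients of the type II Hahn polynomial in the basis
`(−x)_k` and the coefficients of the type II Jacobi–Piñeiro polynomial in the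
power basis: `q_k = (−1)^k (N−k)!/(N−|n|)! · p_k`. -/
theorem hahn_jacobiPineiro_coefficient_relation
    (p : ℕ) (hp : 0 < p) (n : Fin p → ℕ) (hn : ∀ i, 0 < n i)
    (S : ℕ) (hS : S = ∑ i, n i)
    (α : Fin p → ℝ) (hα : ∀ i, -1 < α i)
    (hαint : ∀ i j, i ≠ j → ∀ z : ℤ, α i - α j ≠ (z : ℝ))
    (β : ℝ) (hβ : -1 < β) (N : ℕ) (hS2 : 2 ≤ S) (hSN : S ≤ N)
    (P : Polynomial ℝ) (hPmonic : P.Monic) (hPdeg : P.natDegree = S)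
    (hPorth : ∀ i, ∀ j < n i,
      ∫ x in Set.Ioo (0 : ℝ) 1, x ^ j * P.eval x * x ^ α i * (1 - x) ^ β = 0)
    (Q : Polynomial ℝ) (hQmonic : Q.Monic) (hQdeg : Q.natDegree = S)
    (hQorth : ∀ i, ∀ j < n i,
      ∑ k ∈ range (N + 1),
        Q.eval (k : ℝ) * (Real.Gamma ((k : ℝ) + α i + j + 1) / Real.Gamma ((k : ℝ) + 1)) *
          (Real.Gamma (β + N - k + 1) / Real.Gamma ((N : ℝ) - k + 1)) = 0)
    (q : ℕ → ℝ)
    (hq : ∀ x : ℝ, Q.eval x = ∑ k ∈ range (S + 1), q k * ∏ j ∈ range k, ((j : ℝ) - x)) :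
    ∀ k ≤ S,
      q k = (-1 : ℝ) ^ k * ((Nat.factorial (N - k) : ℝ) / (Nat.factorial (N - S) : ℝ)) *
        P.coeff k :=
  hahn_jacobiPineiro_coefficient_relation_general p n S hS α hα hαint β hβ N hSN P hPmonic hPdeg
    hPorth Q hQmonic hQdeg hQorth q hq
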